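/- Define the space T ⊆ C^∞(ℝ ∖ {0}) to consist of those complex-valued f ∈ C^∞(ℝ ∖ {0}) such that for all α, β, l ∈ ℕ, sup_{x ∈ ℝ ∖ {0}} | |x|^α · M^β (x^l f^{(l)}(x)) | < ∞, where M is the operator (Mg)(x) = |x| · g''(x). Then T is not stable under the Fourier transform 𝓕f(ξ) = (2π)^{−1/2} ∫_ℝ f(x) e^{−iξx} dx. Specifically: (1) the function f₀(x) = e^{−|x|} belongs to T; (2) 𝓕f₀(ξ) = √(2/π) · (1 + ξ²)^{−1}; (3) the function ξ ↦ √(2/π) · (1 + ξ²)^{−1} does not belong to T, since already sup_{ξ ≠ 0} |ξ|³ (1+ξ²)^{−1} = ∞. -/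

import Mathlib

open MeasureTheory Set

noncomputable section

/-- The operator `(Mg)(x) = |x| · g''(x)`. -/
def Mop (g : ℝ → ℂ) (x : ℝ) : ℂ :=
  ((|x| : ℝ) : ℂ) * deriv (deriv g) x

/-- The space `T` of Faustino–Negzaoui (their `𝒮_{k,n}(ℝ)` with `k = 0`, `n = 2`):
smooth functions `f` on `ℝ ∖ {0}` with
`sup_{x ≠ 0} | |x|^α · M^β (x^l f^{(l)}(x)) | < ∞` for all `α, β, l ∈ ℕ`. -/
def memT (f : ℝ → ℂ) : Prop :=
  ContDiffOn ℝ (⊤ : ℕ∞) f {x : ℝ | x ≠ 0} ∧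
  ∀ α β l : ℕ, ∃ C : ℝ, ∀ x : ℝ, x ≠ 0 →
    ‖((|x| ^ α : ℝ) : ℂ) *
        (Mop^[β] (fun y : ℝ => (y : ℂ) ^ l * iteratedDeriv l f y)) x‖ ≤ C

/-- The Fourier transform `𝓕f(ξ) = (2π)^{−1/2} ∫ f(x) e^{−iξx} dx`. -/
def FT (f : ℝ → ℂ) (ξ : ℝ) : ℂ :=
  (((2 * Real.pi) ^ (-(1 : ℝ) / 2) : ℝ) : ℂ) *
    ∫ x : ℝ, f x * Complex.exp (-Complex.I * ξ * x)

lemma cexp_int (c : ℂ) (hc : 0 < c.re) :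
    ∫ x in Ioi (0:ℝ), Complex.exp (-(c * x)) = 1 / c := by
  have hderiv : ∀ x ∈ Ici (0:ℝ), HasDerivAt (fun x : ℝ => -Complex.exp (-(c * x)) / c)
      (Complex.exp (-(c * x))) x := by
    intro x _
    have h1 : HasDerivAt (fun x : ℝ => (x : ℂ)) 1 x := Complex.ofRealCLM.hasDerivAt
    have h2 : HasDerivAt (fun x : ℝ => -(c * (x : ℂ))) (-c) x := by
      simpa [Pi.neg_def] using (h1.const_mul c).neg
    have h3 := (h2.cexp.neg.div_const c)
    have hc0 : c ≠ 0 := fun h => by simp [h] at hc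
    convert h3 using 1
    · rfl
    · rfl
    rw [mul_neg, neg_neg, mul_div_assoc, div_self hc0, mul_one]
  have hint : IntegrableOn (fun x : ℝ => Complex.exp (-(c * x))) (Ioi 0) := by
    refine (Integrable.mono' (exp_neg_integrableOn_Ioi 0 hc) ?_ ?_)
    · exact (Complex.continuous_exp.comp (by continuity)).aestronglyMeasurable
    · filter_upwards with x
      rw [Complex.norm_exp]
      simp
  have htend : Filter.Tendsto (fun x : ℝ => -Complex.exp (-(c * x)) / c) Filter.atTop (nhds 0) := by
    have : Filter.Tendsto (fun x : ℝ => Complex.exp (-(c * x))) Filter.atTop (nhds 0) := by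
      rw [tendsto_zero_iff_norm_tendsto_zero]
      have : ∀ x : ℝ, ‖Complex.exp (-(c * x))‖ = Real.exp (-(c.re * x)) := by
        intro x; rw [Complex.norm_exp]; simp
      simp_rw [this]
      exact Real.tendsto_exp_atBot.comp
        (Filter.tendsto_neg_atTop_atBot.comp (Filter.Tendsto.const_mul_atTop hc Filter.tendsto_id))
    simpa using (this.neg.div_const c)
  have := integral_Ioi_of_hasDerivAt_of_tendsto' hderiv hint htend
  simp at this
  rw [this]; ring

lemma FT_exp_abs (ξ : ℝ) : FT (fun x : ℝ => ((Real.exp (-|x|) : ℝ) : ℂ)) ξ =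
      ((Real.sqrt (2 / Real.pi) * (1 + ξ ^ 2)⁻¹ : ℝ) : ℂ) := by
  set F : ℝ → ℂ := fun x => ((Real.exp (-|x|) : ℝ) : ℂ) * Complex.exp (-Complex.I * ξ * x) with hF
  have hFcont : Continuous F := by
    apply Continuous.mul
    · exact Complex.continuous_ofReal.comp (Real.continuous_exp.comp (continuous_abs.neg))
    · exact Complex.continuous_exp.comp (by continuity)
  have h1 : (1 - Complex.I * ξ) ≠ 0 := by
    intro h
    have := congrArg Complex.re h
    simp at this
  have h2 : (1 + Complex.I * ξ) ≠ 0 := by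
    intro h
    have := congrArg Complex.re h
    simp at this
  have hre1 : (0:ℝ) < (1 + Complex.I * ξ).re := by simp
  have hre2 : (0:ℝ) < (1 - Complex.I * ξ).re := by simp
  -- right side
  have hIoiEq : EqOn F (fun x : ℝ => Complex.exp (-((1 + Complex.I * ξ) * x))) (Ioi 0) := by
    intro x hx
    have : |x| = x := abs_of_pos hx
    simp only [hF, this]
    rw [Complex.ofReal_exp, ← Complex.exp_add]
    congr 1
    push_cast
    ring
  have hIicEq : ∀ x ∈ Iic (0:ℝ), F x = Complex.exp ((1 - Complex.I * ξ) * x) := by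
    intro x hx
    have : |x| = -x := abs_of_nonpos hx
    simp only [hF, this]
    rw [Complex.ofReal_exp, ← Complex.exp_add]
    congr 1
    push_cast
    ring
  have hintIoi : IntegrableOn F (Ioi 0) := by
    refine Integrable.mono' (exp_neg_integrableOn_Ioi 0 one_pos) hFcont.aestronglyMeasurable.restrict ?_
    filter_upwards [ae_restrict_mem measurableSet_Ioi] with x hx
    simp only [hF, norm_mul, Complex.norm_real, Real.norm_eq_abs, Complex.norm_exp]
    have h0 : (-Complex.I * ξ * x).re = 0 := by simp
    rw [h0, Real.exp_zero, mul_one, abs_of_nonneg (Real.exp_nonneg _), abs_of_pos (by exact hx)]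
    simp
  have hintIic : IntegrableOn F (Iic 0) := by
    refine Integrable.mono' (integrableOn_exp_Iic 0) hFcont.aestronglyMeasurable.restrict ?_
    filter_upwards [ae_restrict_mem measurableSet_Iic] with x hx
    simp only [hF, norm_mul, Complex.norm_real, Real.norm_eq_abs, Complex.norm_exp]
    have h0 : (-Complex.I * ξ * x).re = 0 := by simp
    rw [h0, Real.exp_zero, mul_one, abs_of_nonneg (Real.exp_nonneg _), abs_of_nonpos (by exact hx)]
    simp
  have hIoi : ∫ x in Ioi (0:ℝ), F x = 1 / (1 + Complex.I * ξ) := by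
    rw [setIntegral_congr_fun measurableSet_Ioi hIoiEq]
    exact cexp_int _ hre1
  have hIic : ∫ x in Iic (0:ℝ), F x = 1 / (1 - Complex.I * ξ) := by
    have := integral_comp_neg_Ioi (0:ℝ) F
    rw [neg_zero] at this
    rw [← this]
    rw [setIntegral_congr_fun measurableSet_Ioi (fun x hx => ?_)]
    · exact cexp_int (1 - Complex.I * ξ) hre2
    · show F (-x) = Complex.exp (-((1 - Complex.I * ξ) * x))
      rw [hIicEq (-x) (by simpa using le_of_lt hx)]
      push_cast
      ring_nf
  have htot : ∫ x : ℝ, F x = 1 / (1 - Complex.I * ξ) + 1 / (1 + Complex.I * ξ) := by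
    rw [← intervalIntegral.integral_Iic_add_Ioi hintIic hintIoi, hIic, hIoi]
  have hsum : 1 / (1 - Complex.I * ξ) + 1 / (1 + Complex.I * ξ) = 2 * ((1:ℂ) + ξ ^ 2)⁻¹ := by
    have hne : (1:ℂ) + (ξ:ℂ) ^ 2 ≠ 0 := by
      intro h
      rw [show ((1:ℂ) + (ξ:ℂ)^2) = ((1 + ξ^2 : ℝ) : ℂ) by push_cast; ring,
        Complex.ofReal_eq_zero] at h
      nlinarith [sq_nonneg ξ]
    field_simp
    ring_nf
    rw [Complex.I_sq]
    ring
  have hreal : ((2 * Real.pi) ^ (-(1 : ℝ) / 2) : ℝ) * 2 = Real.sqrt (2 / Real.pi) := by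
    have hπ : (0:ℝ) < Real.pi := Real.pi_pos
    have h2π : (0:ℝ) ≤ 2 * Real.pi := by positivity
    rw [show (-(1:ℝ)/2) = -(1/2) by ring, Real.rpow_neg h2π, ← Real.sqrt_eq_rpow]
    rw [Real.sqrt_mul (by norm_num : (0:ℝ) ≤ 2), Real.sqrt_div (by norm_num : (0:ℝ) ≤ 2)]
    have hs2 : (0:ℝ) < Real.sqrt 2 := Real.sqrt_pos.mpr (by norm_num)
    have hsπ : (0:ℝ) < Real.sqrt Real.pi := Real.sqrt_pos.mpr hπ
    field_simp
    nlinarith [Real.mul_self_sqrt (by norm_num : (0:ℝ) ≤ 2)]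
  rw [FT, htot, hsum]
  have hcast : ((1:ℂ) + (ξ:ℂ) ^ 2)⁻¹ = (((1 + ξ^2)⁻¹ : ℝ) : ℂ) := by push_cast; ring
  rw [hcast]
  rw [show (((2 * Real.pi) ^ (-(1 : ℝ) / 2) : ℝ) : ℂ) * (2 * (((1 + ξ^2)⁻¹ : ℝ) : ℂ))
      = ((((2 * Real.pi) ^ (-(1 : ℝ) / 2) : ℝ) * 2 : ℝ) : ℂ) * (((1 + ξ^2)⁻¹ : ℝ) : ℂ) by push_cast; ring]
  rw [hreal]
  push_cast
  ring

/-- abbreviation for our function -/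
def f₀ : ℝ → ℂ := fun x : ℝ => ((Real.exp (-|x|) : ℝ) : ℂ)

lemma hasDerivAt_cexp_mul (s : ℂ) (x : ℝ) :
    HasDerivAt (fun y : ℝ => Complex.exp (s * ↑y)) (Complex.exp (s * ↑x) * s) x := by
  have h : HasDerivAt (fun z : ℂ => Complex.exp (s * z)) (Complex.exp (s * ↑x) * s) (↑x : ℂ) := by
    simpa [Function.comp_def] using (Complex.hasDerivAt_exp (s * ↑x)).comp (↑x : ℂ)
      ((hasDerivAt_id (↑x : ℂ)).const_mul s)
  exact h.comp_ofReal

lemma hasDerivAt_poly_exp (p : Polynomial ℂ) (s : ℂ) (x : ℝ) :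
    HasDerivAt (fun y : ℝ => p.eval ↑y * Complex.exp (s * ↑y))
      ((p.derivative + Polynomial.C s * p).eval ↑x * Complex.exp (s * ↑x)) x := by
  have h1 : HasDerivAt (fun y : ℝ => p.eval (↑y : ℂ)) (p.derivative.eval ↑x) x :=
    (Polynomial.hasDerivAt p (↑x : ℂ)).comp_ofReal
  have := h1.mul (hasDerivAt_cexp_mul s x)
  convert this using 1
  · rfl
  · rfl
  simp only [Polynomial.eval_add, Polynomial.eval_mul, Polynomial.eval_C]
  ring

lemma deriv_poly_exp (p : Polynomial ℂ) (s : ℂ) :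
    deriv (fun y : ℝ => p.eval ↑y * Complex.exp (s * ↑y)) =
      fun x : ℝ => (p.derivative + Polynomial.C s * p).eval ↑x * Complex.exp (s * ↑x) :=
  funext fun x => (hasDerivAt_poly_exp p s x).deriv

/-- one step of `Mop` on the polynomial level -/
def pstep (s : ℂ) (p : Polynomial ℂ) : Polynomial ℂ :=
  (p.derivative + Polynomial.C s * p).derivative +
    Polynomial.C s * (p.derivative + Polynomial.C s * p)

lemma Mop_poly_exp (p : Polynomial ℂ) (s : ℂ) (x : ℝ) :
    Mop (fun y : ℝ => p.eval ↑y * Complex.exp (s * ↑y)) x =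
      ((|x| : ℝ) : ℂ) * ((pstep s p).eval ↑x * Complex.exp (s * ↑x)) := by
  rw [Mop, deriv_poly_exp p s, deriv_poly_exp _ s]
  rfl

/-- smoothness of the model `y ↦ exp (s y)` -/
lemma contDiff_cexp_mul (s : ℂ) : ContDiff ℝ (⊤ : ℕ∞) (fun y : ℝ => Complex.exp (s * ↑y)) := by
  have h1 : ContDiff ℝ (⊤ : ℕ∞) (fun y : ℝ => s * (↑y : ℂ)) :=
    contDiff_const.mul Complex.ofRealCLM.contDiff
  have h2 : ContDiff ℝ (⊤ : ℕ∞) (Complex.exp : ℂ → ℂ) := Complex.contDiff_exp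
  exact h2.comp h1

lemma f₀_eq_pos : EqOn f₀ (fun y : ℝ => Complex.exp ((-1 : ℂ) * ↑y)) (Ioi 0) := by
  intro y hy
  have : |y| = y := abs_of_pos hy
  simp only [f₀, this, Complex.ofReal_exp]
  norm_num

lemma f₀_eq_neg : EqOn f₀ (fun y : ℝ => Complex.exp ((1 : ℂ) * ↑y)) (Iio 0) := by
  intro y hy
  have : |y| = -y := abs_of_nonpos (le_of_lt hy)
  simp only [f₀, this, Complex.ofReal_exp]
  norm_num

lemma iteratedDeriv_f₀_pos (l : ℕ) :
    EqOn (iteratedDeriv l f₀) (fun y : ℝ => (-1 : ℂ) ^ l * Complex.exp ((-1 : ℂ) * ↑y)) (Ioi 0) := by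
  induction l with
  | zero => simpa [iteratedDeriv_zero] using f₀_eq_pos
  | succ l ih =>
    intro x hx
    rw [iteratedDeriv_succ]
    have hev : iteratedDeriv l f₀ =ᶠ[nhds x]
        (fun y : ℝ => (-1 : ℂ) ^ l * Complex.exp ((-1 : ℂ) * ↑y)) :=
      Filter.eventuallyEq_of_mem (isOpen_Ioi.mem_nhds hx) ih
    rw [hev.deriv_eq]
    have h := ((hasDerivAt_cexp_mul (-1 : ℂ) x).const_mul ((-1 : ℂ) ^ l)).deriv
    rw [h]
    ring

lemma iteratedDeriv_f₀_neg (l : ℕ) :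
    EqOn (iteratedDeriv l f₀) (fun y : ℝ => Complex.exp ((1 : ℂ) * ↑y)) (Iio 0) := by
  induction l with
  | zero => simpa [iteratedDeriv_zero] using f₀_eq_neg
  | succ l ih =>
    intro x hx
    rw [iteratedDeriv_succ]
    have hev : iteratedDeriv l f₀ =ᶠ[nhds x]
        (fun y : ℝ => Complex.exp ((1 : ℂ) * ↑y)) :=
      Filter.eventuallyEq_of_mem (isOpen_Iio.mem_nhds hx) ih
    rw [hev.deriv_eq, (hasDerivAt_cexp_mul (1 : ℂ) x).deriv]
    ring

lemma contDiffOn_f₀ : ContDiffOn ℝ (⊤ : ℕ∞) f₀ {x : ℝ | x ≠ 0} := by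
  intro x hx
  rcases lt_or_gt_of_ne (hx : x ≠ 0) with h | h
  · exact ((contDiff_cexp_mul 1).contDiffAt.congr_of_eventuallyEq
      (Filter.eventuallyEq_of_mem (isOpen_Iio.mem_nhds h) f₀_eq_neg)).contDiffWithinAt
  · exact ((contDiff_cexp_mul (-1)).contDiffAt.congr_of_eventuallyEq
      (Filter.eventuallyEq_of_mem (isOpen_Ioi.mem_nhds h) f₀_eq_pos)).contDiffWithinAt

/-- the polynomials describing `Mop^[β]` on the positive side -/
def Qpos (l : ℕ) : ℕ → Polynomial ℂ
  | 0 => (-Polynomial.X) ^ l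
  | β + 1 => Polynomial.X * pstep (-1) (Qpos l β)

/-- the polynomials describing `Mop^[β]` on the negative side -/
def Qneg (l : ℕ) : ℕ → Polynomial ℂ
  | 0 => Polynomial.X ^ l
  | β + 1 => -Polynomial.X * pstep 1 (Qneg l β)

lemma Mop_iter_pos (l β : ℕ) :
    EqOn (Mop^[β] (fun y : ℝ => (y : ℂ) ^ l * iteratedDeriv l f₀ y))
      (fun y : ℝ => (Qpos l β).eval ↑y * Complex.exp ((-1 : ℂ) * ↑y)) (Ioi 0) := by
  induction β with
  | zero =>
    intro x hx
    simp only [Function.iterate_zero, id_eq]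
    rw [iteratedDeriv_f₀_pos l hx]
    simp [Qpos]
    ring
  | succ β ih =>
    intro x hx
    rw [Function.iterate_succ_apply']
    have hev : Mop^[β] (fun y : ℝ => (y : ℂ) ^ l * iteratedDeriv l f₀ y) =ᶠ[nhds x]
        (fun y : ℝ => (Qpos l β).eval ↑y * Complex.exp ((-1 : ℂ) * ↑y)) :=
      Filter.eventuallyEq_of_mem (isOpen_Ioi.mem_nhds hx) ih
    rw [Mop, (hev.deriv).deriv_eq]
    have := Mop_poly_exp (Qpos l β) (-1) x
    rw [Mop] at this
    rw [this]
    have hax : |x| = x := abs_of_pos hx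
    simp only [Qpos, Polynomial.eval_mul, Polynomial.eval_X, hax]
    ring

lemma Mop_iter_neg (l β : ℕ) :
    EqOn (Mop^[β] (fun y : ℝ => (y : ℂ) ^ l * iteratedDeriv l f₀ y))
      (fun y : ℝ => (Qneg l β).eval ↑y * Complex.exp ((1 : ℂ) * ↑y)) (Iio 0) := by
  induction β with
  | zero =>
    intro x hx
    simp only [Function.iterate_zero, id_eq]
    rw [iteratedDeriv_f₀_neg l hx]
    simp [Qneg]
  | succ β ih =>
    intro x hx
    rw [Function.iterate_succ_apply']
    have hev : Mop^[β] (fun y : ℝ => (y : ℂ) ^ l * iteratedDeriv l f₀ y) =ᶠ[nhds x]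
        (fun y : ℝ => (Qneg l β).eval ↑y * Complex.exp ((1 : ℂ) * ↑y)) :=
      Filter.eventuallyEq_of_mem (isOpen_Iio.mem_nhds hx) ih
    rw [Mop, (hev.deriv).deriv_eq]
    have := Mop_poly_exp (Qneg l β) 1 x
    rw [Mop] at this
    rw [this]
    have hax : |x| = -x := abs_of_nonpos (le_of_lt hx)
    simp only [Qneg, Polynomial.eval_mul, Polynomial.eval_X, Polynomial.eval_neg, hax]
    push_cast
    ring

lemma pow_le_factorial_mul_exp (t : ℝ) (ht : 0 ≤ t) (n : ℕ) :
    t ^ n ≤ n.factorial * Real.exp t := by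
  have h1 : t ^ n / n.factorial ≤ ∑ i ∈ Finset.range (n + 1), t ^ i / i.factorial :=
    Finset.single_le_sum (f := fun i => t ^ i / i.factorial)
      (fun i _ => by positivity) (Finset.self_mem_range_succ n)
  have h2 := Real.sum_le_exp_of_nonneg ht (n + 1)
  have h3 : t ^ n / n.factorial ≤ Real.exp t := le_trans h1 h2
  have h4 : (0:ℝ) < n.factorial := by positivity
  calc t ^ n = t ^ n / n.factorial * n.factorial := by field_simp
    _ ≤ Real.exp t * n.factorial := by
        exact mul_le_mul_of_nonneg_right h3 (le_of_lt h4)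
    _ = n.factorial * Real.exp t := by ring

lemma pow_mul_exp_neg_le (t : ℝ) (ht : 0 ≤ t) (n : ℕ) :
    t ^ n * Real.exp (-t) ≤ n.factorial := by
  have h := pow_le_factorial_mul_exp t ht n
  have hexp : (0:ℝ) < Real.exp (-t) := Real.exp_pos _
  calc t ^ n * Real.exp (-t) ≤ n.factorial * Real.exp t * Real.exp (-t) :=
        mul_le_mul_of_nonneg_right h (le_of_lt hexp)
    _ = n.factorial := by rw [mul_assoc, ← Real.exp_add]; simp

lemma poly_exp_bound (p : Polynomial ℂ) (α : ℕ) :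
    ∃ C : ℝ, ∀ x : ℝ, |x| ^ α * ‖p.eval ↑x‖ * Real.exp (-|x|) ≤ C := by
  refine ⟨∑ i ∈ Finset.range (p.natDegree + 1), ‖p.coeff i‖ * (α + i).factorial, fun x => ?_⟩
  have habs : (0:ℝ) ≤ |x| := abs_nonneg x
  have hnorm : ‖p.eval (↑x : ℂ)‖ ≤ ∑ i ∈ Finset.range (p.natDegree + 1), ‖p.coeff i‖ * |x| ^ i := by
    rw [Polynomial.eval_eq_sum_range]
    refine le_trans (norm_sum_le _ _) (Finset.sum_le_sum fun i _ => le_of_eq ?_)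
    rw [norm_mul, norm_pow, Complex.norm_real, Real.norm_eq_abs]
  calc |x| ^ α * ‖p.eval ↑x‖ * Real.exp (-|x|)
      ≤ |x| ^ α * (∑ i ∈ Finset.range (p.natDegree + 1), ‖p.coeff i‖ * |x| ^ i) *
          Real.exp (-|x|) := by
        apply mul_le_mul_of_nonneg_right _ (le_of_lt (Real.exp_pos _))
        exact mul_le_mul_of_nonneg_left hnorm (by positivity)
    _ = ∑ i ∈ Finset.range (p.natDegree + 1),
          ‖p.coeff i‖ * (|x| ^ (α + i) * Real.exp (-|x|)) := by
        rw [Finset.mul_sum, Finset.sum_mul]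
        congr 1
        funext i
        rw [pow_add]
        ring
    _ ≤ ∑ i ∈ Finset.range (p.natDegree + 1), ‖p.coeff i‖ * (α + i).factorial := by
        refine Finset.sum_le_sum fun i _ => ?_
        exact mul_le_mul_of_nonneg_left (pow_mul_exp_neg_le _ habs _) (norm_nonneg _)

lemma memT_f₀ : memT f₀ := by
  refine ⟨contDiffOn_f₀, fun α β l => ?_⟩
  obtain ⟨C₁, hC₁⟩ := poly_exp_bound (Qpos l β) α
  obtain ⟨C₂, hC₂⟩ := poly_exp_bound (Qneg l β) α
  refine ⟨max C₁ C₂, fun x hx => ?_⟩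
  rw [norm_mul]
  have h1 : ‖((|x| ^ α : ℝ) : ℂ)‖ = |x| ^ α := by
    rw [Complex.norm_real, Real.norm_eq_abs, abs_of_nonneg (by positivity)]
  rw [h1]
  rcases lt_or_gt_of_ne hx with h | h
  · rw [Mop_iter_neg l β h]
    have hax : |x| = -x := abs_of_nonpos (le_of_lt h)
    rw [norm_mul, Complex.norm_exp]
    have hre : ((1 : ℂ) * ↑x).re = -|x| := by simp [hax]
    rw [hre]
    calc |x| ^ α * (‖(Qneg l β).eval ↑x‖ * Real.exp (-|x|)) =
          |x| ^ α * ‖(Qneg l β).eval ↑x‖ * Real.exp (-|x|) := by ring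
      _ ≤ C₂ := hC₂ x
      _ ≤ max C₁ C₂ := le_max_right _ _
  · rw [Mop_iter_pos l β h]
    have hax : |x| = x := abs_of_pos h
    rw [norm_mul, Complex.norm_exp]
    have hre : ((-1 : ℂ) * ↑x).re = -|x| := by simp [hax]
    rw [hre]
    calc |x| ^ α * (‖(Qpos l β).eval ↑x‖ * Real.exp (-|x|)) =
          |x| ^ α * ‖(Qpos l β).eval ↑x‖ * Real.exp (-|x|) := by ring
      _ ≤ C₁ := hC₁ x
      _ ≤ max C₁ C₂ := le_max_left _ _


lemma unbounded_aux (C : ℝ) : ∃ ξ : ℝ, ξ ≠ 0 ∧ C < |ξ| ^ 3 * (1 + ξ ^ 2)⁻¹ := by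
  refine ⟨max (2 * C + 2) 2, ?_, ?_⟩
  · have : (0:ℝ) < max (2 * C + 2) 2 := lt_of_lt_of_le (by norm_num) (le_max_right _ _)
    exact ne_of_gt this
  · set t := max (2 * C + 2) 2 with ht
    have ht2 : (2:ℝ) ≤ t := le_max_right _ _
    have htC : 2 * C + 2 ≤ t := le_max_left _ _
    have ht0 : (0:ℝ) < t := by linarith
    have hpos : (0:ℝ) < 1 + t ^ 2 := by positivity
    rw [abs_of_pos ht0, ← div_eq_mul_inv, lt_div_iff₀ hpos]
    nlinarith [mul_le_mul_of_nonneg_right htC hpos.le,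
      mul_le_mul_of_nonneg_left ht2 (sq_nonneg t), sq_nonneg t, sq_nonneg (t - 2)]

lemma not_memT_target :
    ¬ memT (fun ξ : ℝ => ((Real.sqrt (2 / Real.pi) * (1 + ξ ^ 2)⁻¹ : ℝ) : ℂ)) := by
  rintro ⟨-, hB⟩
  obtain ⟨C, hC⟩ := hB 3 0 0
  set s := Real.sqrt (2 / Real.pi) with hs
  have hs0 : (0:ℝ) < s := Real.sqrt_pos.mpr (by positivity)
  obtain ⟨ξ, hξ0, hξ⟩ := unbounded_aux (C / s)
  have hC' := hC ξ hξ0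
  simp only [Function.iterate_zero, id_eq, pow_zero, one_mul, iteratedDeriv_zero] at hC'
  have hnorm : ‖((|ξ| ^ 3 : ℝ) : ℂ) * ((s * (1 + ξ ^ 2)⁻¹ : ℝ) : ℂ)‖
      = |ξ| ^ 3 * (s * (1 + ξ ^ 2)⁻¹) := by
    rw [← Complex.ofReal_mul, Complex.norm_real, Real.norm_eq_abs, abs_of_nonneg]
    positivity
  rw [hnorm] at hC'
  have : C < |ξ| ^ 3 * (s * (1 + ξ ^ 2)⁻¹) := by
    rw [div_lt_iff₀ hs0] at hξ
    calc C < |ξ| ^ 3 * (1 + ξ ^ 2)⁻¹ * s := hξ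
      _ = |ξ| ^ 3 * (s * (1 + ξ ^ 2)⁻¹) := by ring
  linarith

theorem stmt19 :
    (¬ ∀ f : ℝ → ℂ, memT f → memT (FT f)) ∧
    memT (fun x : ℝ => ((Real.exp (-|x|) : ℝ) : ℂ)) ∧
    (∀ ξ : ℝ, FT (fun x : ℝ => ((Real.exp (-|x|) : ℝ) : ℂ)) ξ =
      ((Real.sqrt (2 / Real.pi) * (1 + ξ ^ 2)⁻¹ : ℝ) : ℂ)) ∧
    ¬ memT (fun ξ : ℝ => ((Real.sqrt (2 / Real.pi) * (1 + ξ ^ 2)⁻¹ : ℝ) : ℂ)) ∧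
    (∀ C : ℝ, ∃ ξ : ℝ, ξ ≠ 0 ∧ C < |ξ| ^ 3 * (1 + ξ ^ 2)⁻¹) := by
  have hFT : FT (fun x : ℝ => ((Real.exp (-|x|) : ℝ) : ℂ)) =
      (fun ξ : ℝ => ((Real.sqrt (2 / Real.pi) * (1 + ξ ^ 2)⁻¹ : ℝ) : ℂ)) :=
    funext FT_exp_abs
  refine ⟨?_, memT_f₀, FT_exp_abs, not_memT_target, unbounded_aux⟩
  intro h
  have h2 := h _ memT_f₀
  rw [show FT f₀ = (fun ξ : ℝ => ((Real.sqrt (2 / Real.pi) * (1 + ξ ^ 2)⁻¹ : ℝ) : ℂ)) from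
    funext FT_exp_abs] at h2
  exact not_memT_target h2

end
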